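/- arXiv:2204.06720 — 4 statements merged into one kernel-verified Lean document; each statement's English description precedes it below -/
import Mathlib

section
/- If Z is an asimulation between two intuitionistic Kripke models M and M' (a relation satisfying the atom-preservation condition and the 'step' condition: v Z v' and R' v' w' imply there exists w with w Z w', w' Z w, and R v w), then for all v, v' with v Z v', every intuitionistic propositional formula true at (M,v) is true at (M',v'). -/
/-- Intuitionistic propositional formulas: ⊤ | ⊥ | p | φ∧φ | φ∨φ | φ⇒φ. -/
inductive IForm : Type
  | top : IForm
  | bot : IForm
  | atom : ℕ → IForm
  | and : IForm → IForm → IForm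
  | or : IForm → IForm → IForm
  | imp : IForm → IForm → IForm

/-- Intuitionistic Kripke semantics. -/
def isat {W : Type} (R : W → W → Prop) (V : ℕ → W → Prop) : IForm → W → Prop
  | .top, _ => True
  | .bot, _ => False
  | .atom p, w => V p w
  | .and φ ψ, w => isat R V φ w ∧ isat R V ψ w
  | .or φ ψ, w => isat R V φ w ∨ isat R V ψ w
  | .imp φ ψ, w => ∀ v, R w v → isat R V φ v → isat R V ψ v

/-- The conditions of an asimulation for one ordering of the two models:
`Z` is the component from `W` to `W'`, `ZRev` the one from `W'` to `W`. -/
def AsimHalf {W W' : Type} (R : W → W → Prop) (V : ℕ → W → Prop)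
    (R' : W' → W' → Prop) (V' : ℕ → W' → Prop)
    (Z : W → W' → Prop) (ZRev : W' → W → Prop) : Prop :=
  (∀ v v' p, Z v v' → V p v → V' p v') ∧
  (∀ v v' w', Z v v' → R' v' w' → ∃ w, Z w w' ∧ ZRev w' w ∧ R v w)

theorem asimulation_invariance
    {W W' : Type} [Nonempty W] [Nonempty W']
    (R : W → W → Prop) (V : ℕ → W → Prop)
    (R' : W' → W' → Prop) (V' : ℕ → W' → Prop)
    (hrefl : Reflexive R) (htrans : Transitive R)
    (hrefl' : Reflexive R') (htrans' : Transitive R')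
    (hpers : ∀ p v w, R v w → V p v → V p w)
    (hpers' : ∀ p v w, R' v w → V' p v → V' p w)
    (Z : W → W' → Prop) (ZRev : W' → W → Prop)
    (h : AsimHalf R V R' V' Z ZRev)
    (h' : AsimHalf R' V' R V ZRev Z) :
    ∀ v v', Z v v' → ∀ φ : IForm, isat R V φ v → isat R' V' φ v' := by
  
  have main : ∀ φ : IForm,
      (∀ v v', Z v v' → isat R V φ v → isat R' V' φ v') ∧
      (∀ v' v, ZRev v' v → isat R' V' φ v' → isat R V φ v) := by
    intro φ
    induction φ with
    | top => exact ⟨fun _ _ _ _ => trivial, fun _ _ _ _ => trivial⟩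
    | bot => exact ⟨fun _ _ _ hf => hf.elim, fun _ _ _ hf => hf.elim⟩
    | atom p => exact ⟨fun v v' hz hv => h.1 v v' p hz hv,
        fun v' v hz hv => h'.1 v' v p hz hv⟩
    | and φ ψ ihφ ihψ =>
        exact ⟨fun v v' hz hv => ⟨ihφ.1 v v' hz hv.1, ihψ.1 v v' hz hv.2⟩,
          fun v' v hz hv => ⟨ihφ.2 v' v hz hv.1, ihψ.2 v' v hz hv.2⟩⟩
    | or φ ψ ihφ ihψ =>
        exact ⟨fun v v' hz hv => hv.elim (fun hv => Or.inl (ihφ.1 v v' hz hv))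
            (fun hv => Or.inr (ihψ.1 v v' hz hv)),
          fun v' v hz hv => hv.elim (fun hv => Or.inl (ihφ.2 v' v hz hv))
            (fun hv => Or.inr (ihψ.2 v' v hz hv))⟩
    | imp φ ψ ihφ ihψ =>
        constructor
        · intro v v' hz hv w' hr' hφ'
          obtain ⟨w, hw1, hw2, hw3⟩ := h.2 v v' w' hz hr'
          exact ihψ.1 w w' hw1 (hv w hw3 (ihφ.2 w' w hw2 hφ'))
        · intro v' v hz hv w hr hφ
          obtain ⟨w', hw1, hw2, hw3⟩ := h'.2 v' v w hz hr
          exact ihψ.2 w' w hw1 (hv w' hw3 (ihφ.1 w w' hw2 hφ))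
  exact fun v v' hz φ => (main φ).1 v v' hz
end

section
/- Let C be a set of atomic connectives and Z a C-bisimulation between C-models M₁ and M₂. Then for each pair (M,M') with {M,M'} = {M₁,M₂}, and all tuples w⃗ in M and w⃗' in M' with w⃗ Z w⃗', every formula φ of the atomic language L_C true at (M, w⃗) is true at (M', w⃗'). -/
/-- The skeleton of a binary atomic connective of type (1,1,1):
a quantification signature (∃ if `quantEx`, ∀ otherwise), a sign for the
relation and a tonicity sign for each argument. -/
structure BinSkel : Type where
  quantEx : Bool
  relPos : Bool
  pos1 : Bool
  pos2 : Bool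

/-- Sign application: `P` if the sign is `+`, `¬P` if it is `−`. -/
def sgn (b : Bool) (P : Prop) : Prop := if b then P else ¬ P

/-- Atomic formulas over propositional letters and a family `ι` of binary
atomic connectives of type (1,1,1). -/
inductive AForm (ι : Type) : Type
  | atom : ℕ → AForm ι
  | conn : ι → AForm ι → AForm ι → AForm ι

/-- Satisfaction relation of atomic logics (Definition 10), restricted to a
signature of binary connectives of type (1,1,1). -/
def asat {ι W : Type} (sk : ι → BinSkel) (R : ι → W → W → W → Prop)
    (V : ℕ → W → Prop) : AForm ι → W → Prop
  | .atom n, w => V n w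
  | .conn i φ ψ, w =>
      if (sk i).quantEx then
        ∃ v u, sgn (sk i).pos1 (asat sk R V φ v) ∧ sgn (sk i).pos2 (asat sk R V ψ u) ∧
          sgn (sk i).relPos (R i v u w)
      else
        ∀ v u, sgn (sk i).pos1 (asat sk R V φ v) ∨ sgn (sk i).pos2 (asat sk R V ψ u) ∨
          sgn (sk i).relPos (R i v u w)

/-- `v ⋈ⱼ v'` : `Z` in the forward direction if the tonicity sign is `+`,
in the backward direction otherwise. -/
def bow {W W' : Type} (Z : W → W' → Prop) (ZRev : W' → W → Prop)
    (b : Bool) (v : W) (v' : W') : Prop :=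
  if b then Z v v' else ZRev v' v

/-- The C-bisimulation conditions (Definition 17) for one ordering (M,M') of
the two models. -/
def CBisimHalf {ι W W' : Type} (sk : ι → BinSkel)
    (R : ι → W → W → W → Prop) (V : ℕ → W → Prop)
    (R' : ι → W' → W' → W' → Prop) (V' : ℕ → W' → Prop)
    (Z : W → W' → Prop) (ZRev : W' → W → Prop) : Prop :=
  (∀ w w' n, Z w w' → V n w → V' n w') ∧
  (∀ i, (sk i).quantEx = true → ∀ w w' v u, Z w w' → sgn (sk i).relPos (R i v u w) →
    ∃ v' u', bow Z ZRev (sk i).pos1 v v' ∧ bow Z ZRev (sk i).pos2 u u' ∧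
      sgn (sk i).relPos (R' i v' u' w')) ∧
  (∀ i, (sk i).quantEx = false → ∀ w w' v' u', Z w w' →
    ¬ sgn (sk i).relPos (R' i v' u' w') →
    ∃ v u, bow Z ZRev (sk i).pos1 v v' ∧ bow Z ZRev (sk i).pos2 u u' ∧
      ¬ sgn (sk i).relPos (R i v u w))

lemma sgn_mono {b : Bool} {P Q : Prop} (h1 : b = true → P → Q)
    (h2 : b = false → Q → P) : sgn b P → sgn b Q := by
  cases b <;> simp [sgn] <;> intro h <;> [exact fun hq => h (h2 rfl hq); exact h1 rfl h]

lemma conn_step {ι W W' : Type} (sk : ι → BinSkel)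
    (R : ι → W → W → W → Prop) (V : ℕ → W → Prop)
    (R' : ι → W' → W' → W' → Prop) (V' : ℕ → W' → Prop)
    (Z : W → W' → Prop) (ZRev : W' → W → Prop)
    (h : CBisimHalf sk R V R' V' Z ZRev) (i : ι) (φ ψ : AForm ι)
    (ihφ : ∀ w w', Z w w' → asat sk R V φ w → asat sk R' V' φ w')
    (ihφ' : ∀ w' w, ZRev w' w → asat sk R' V' φ w' → asat sk R V φ w)
    (ihψ : ∀ w w', Z w w' → asat sk R V ψ w → asat sk R' V' ψ w')
    (ihψ' : ∀ w' w, ZRev w' w → asat sk R' V' ψ w' → asat sk R V ψ w)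
    (w : W) (w' : W') (hz : Z w w') (hsat : asat sk R V (.conn i φ ψ) w) :
    asat sk R' V' (.conn i φ ψ) w' := by
  simp only [asat] at hsat ⊢
  by_cases hq : (sk i).quantEx
  · simp only [hq, if_true] at hsat ⊢
    obtain ⟨v, u, h1, h2, h3⟩ := hsat
    obtain ⟨v', u', b1, b2, hr⟩ := h.2.1 i hq w w' v u hz h3
    refine ⟨v', u', ?_, ?_, hr⟩
    · refine sgn_mono (fun hb => ?_) (fun hb => ?_) h1
      · rw [hb] at b1; exact ihφ v v' b1
      · rw [hb] at b1; exact ihφ' v' v b1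
    · refine sgn_mono (fun hb => ?_) (fun hb => ?_) h2
      · rw [hb] at b2; exact ihψ u u' b2
      · rw [hb] at b2; exact ihψ' u' u b2
  · simp only [hq, if_false] at hsat ⊢
    intro v' u'
    by_cases hr' : sgn (sk i).relPos (R' i v' u' w')
    · exact Or.inr (Or.inr hr')
    · obtain ⟨v, u, b1, b2, hnr⟩ :=
        h.2.2 i (by simpa using hq) w w' v' u' hz hr'
      rcases hsat v u with h1 | h2 | h3
      · refine Or.inl (sgn_mono (fun hb => ?_) (fun hb => ?_) h1)
        · rw [hb] at b1; exact ihφ v v' b1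
        · rw [hb] at b1; exact ihφ' v' v b1
      · refine Or.inr (Or.inl (sgn_mono (fun hb => ?_) (fun hb => ?_) h2))
        · rw [hb] at b2; exact ihψ u u' b2
        · rw [hb] at b2; exact ihψ' u' u b2
      · exact absurd h3 hnr

theorem atomic_bisimulation_invariance
    {ι W₁ W₂ : Type} [Nonempty W₁] [Nonempty W₂] (sk : ι → BinSkel)
    (R₁ : ι → W₁ → W₁ → W₁ → Prop) (V₁ : ℕ → W₁ → Prop)
    (R₂ : ι → W₂ → W₂ → W₂ → Prop) (V₂ : ℕ → W₂ → Prop)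
    (Z₁₂ : W₁ → W₂ → Prop) (Z₂₁ : W₂ → W₁ → Prop)
    (h₁₂ : CBisimHalf sk R₁ V₁ R₂ V₂ Z₁₂ Z₂₁)
    (h₂₁ : CBisimHalf sk R₂ V₂ R₁ V₁ Z₂₁ Z₁₂) :
    (∀ w w', Z₁₂ w w' → ∀ φ : AForm ι, asat sk R₁ V₁ φ w → asat sk R₂ V₂ φ w') ∧
    (∀ w w', Z₂₁ w w' → ∀ φ : AForm ι, asat sk R₂ V₂ φ w → asat sk R₁ V₁ φ w') := by
  suffices h : ∀ φ : AForm ι,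
      (∀ w w', Z₁₂ w w' → asat sk R₁ V₁ φ w → asat sk R₂ V₂ φ w') ∧
      (∀ w w', Z₂₁ w w' → asat sk R₂ V₂ φ w → asat sk R₁ V₁ φ w') by
    exact ⟨fun w w' hz φ => (h φ).1 w w' hz, fun w w' hz φ => (h φ).2 w w' hz⟩
  intro φ
  induction φ with
  | atom n =>
      exact ⟨fun w w' hz => h₁₂.1 w w' n hz, fun w w' hz => h₂₁.1 w w' n hz⟩
  | conn i φ ψ ihφ ihψ =>
      exact ⟨conn_step sk R₁ V₁ R₂ V₂ Z₁₂ Z₂₁ h₁₂ i φ ψ ihφ.1 ihφ.2 ihψ.1 ihψ.2,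
             conn_step sk R₂ V₂ R₁ V₁ Z₂₁ Z₁₂ h₂₁ i φ ψ ihφ.2 ihφ.1 ihψ.2 ihψ.1⟩
end

section
/- Let C be a set of atomic connectives closed under Boolean negation (for each connective c ∈ C, the Boolean negation −c, obtained by flipping the sign, the quantification signature, and all tonicity signs while keeping the same interpreting relation, is also in C). Then for every formula φ ∈ L_C, every C-model M, and every tuple w⃗ of the appropriate type, w⃗ ∈ ⟦−φ⟧ᴹ if and only if w⃗ ∉ ⟦φ⟧ᴹ. -/
lemma sgn_not (b : Bool) (P : Prop) : sgn (!b) P ↔ ¬ sgn b P := by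
  cases b <;> simp [sgn]

/-- Atomic formulas over a family `ι` of binary relations, where each
occurrence of a connective carries its own skeleton
(quantification signature, relation sign, tonicity signs); propositional
letters carry their sign as well. -/
inductive NForm (ι : Type) : Type
  | atom : Bool → ℕ → NForm ι
  | conn : Bool → Bool → Bool → Bool → ι → NForm ι → NForm ι → NForm ι

/-- The Boolean negation `−φ` of a formula: flip the sign, the quantification
signature and all tonicity signs of the outermost connective, keeping the
same interpreting relation. -/
def NForm.bneg {ι : Type} : NForm ι → NForm ι
  | .atom b n => .atom (!b) n
  | .conn q r p₁ p₂ i φ ψ => .conn (!q) (!r) (!p₁) (!p₂) i φ ψ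

/-- Satisfaction for atomic logics with binary connectives of type (1,1,1). -/
def nsat {ι W : Type} (R : ι → W → W → W → Prop) (V : ℕ → W → Prop) :
    NForm ι → W → Prop
  | .atom b n, w => sgn b (V n w)
  | .conn q r p₁ p₂ i φ ψ, w =>
      if q then
        ∃ v u, sgn p₁ (nsat R V φ v) ∧ sgn p₂ (nsat R V ψ u) ∧ sgn r (R i v u w)
      else
        ∀ v u, sgn p₁ (nsat R V φ v) ∨ sgn p₂ (nsat R V ψ u) ∨ sgn r (R i v u w)

/-- Proposition 6 (Boolean negation): `⟦−φ⟧` is the complement of `⟦φ⟧`. -/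
theorem boolean_negation
    {ι W : Type} [Nonempty W] (R : ι → W → W → W → Prop) (V : ℕ → W → Prop)
    (φ : NForm ι) (w : W) :
    nsat R V φ.bneg w ↔ ¬ nsat R V φ w := by
  cases φ with
  | atom b n => simp [NForm.bneg, nsat, sgn_not]
  | conn q r p₁ p₂ i φ ψ =>
    cases q with
    | true =>
      simp only [NForm.bneg, Bool.not_true, nsat, reduceIte,
        reduceIte, sgn_not, not_exists]
      constructor
      · intro h v u hvu; rcases h v u with h'|h'|h' <;> tauto
      · intro h v u; by_contra hc; push_neg at hc; exact h v u ⟨hc.1, hc.2.1, hc.2.2⟩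
    | false =>
      simp only [NForm.bneg, Bool.not_false, nsat, reduceIte,
        reduceIte, sgn_not]
      constructor
      · rintro ⟨v, u, h1, h2, h3⟩ h; rcases h v u with h'|h'|h' <;> tauto
      · intro h
        by_contra hc; push_neg at hc
        exact h (fun v u => by have := hc v u; tauto)
end

section
/- Detour lemma for modal bisimulations via ultrapowers (Hennessy–Milner property for ω-saturated models): if M and M' are ω-saturated Kripke models (it suffices to assume: for every world and every finitely satisfiable set of modal formulas over its successors, the whole set is satisfiable at one successor — 'modally saturated'), then modal-theory inclusion is a C-bisimulation; i.e., the relation Z defined by w Z w' iff every modal formula true at (M,w) is true at (M',w') (in both directions between the two models) satisfies the forth condition for ◇ and the back condition for □. -/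
/-- Modal formulas: p | ¬p | φ∧φ | φ∨φ | ◇φ | □φ. -/
inductive MForm : Type
  | atom : ℕ → MForm
  | natom : ℕ → MForm
  | and : MForm → MForm → MForm
  | or : MForm → MForm → MForm
  | dia : MForm → MForm
  | box : MForm → MForm

/-- Kripke semantics. -/
def msat {W : Type} (R : W → W → Prop) (V : ℕ → W → Prop) : MForm → W → Prop
  | .atom p, w => V p w
  | .natom p, w => ¬ V p w
  | .and φ ψ, w => msat R V φ w ∧ msat R V ψ w
  | .or φ ψ, w => msat R V φ w ∨ msat R V ψ w
  | .dia φ, w => ∃ v, R w v ∧ msat R V φ v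
  | .box φ, w => ∀ v, R w v → msat R V φ v

/-- Modal (m-)saturation: if every finite subset of a set `Σ` of modal
formulas is satisfied at some `R`-successor of `w`, then some `R`-successor of
`w` satisfies all of `Σ`; and dually, if every finite subset of `Σ` fails
entirely at some `R`-successor of `w`, then some `R`-successor of `w` makes
all of `Σ` fail. -/
def MSaturated {W : Type} (R : W → W → Prop) (V : ℕ → W → Prop) : Prop :=
  (∀ (w : W) (S : Set MForm),
    (∀ s : Finset MForm, ↑s ⊆ S → ∃ v, R w v ∧ ∀ φ ∈ s, msat R V φ v) →
    ∃ v, R w v ∧ ∀ φ ∈ S, msat R V φ v) ∧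
  (∀ (w : W) (S : Set MForm),
    (∀ s : Finset MForm, ↑s ⊆ S → ∃ v, R w v ∧ ∀ φ ∈ s, ¬ msat R V φ v) →
    ∃ v, R w v ∧ ∀ φ ∈ S, ¬ msat R V φ v)

def conjL : List MForm → MForm
  | [] => .or (.atom 0) (.natom 0)
  | φ :: l => .and φ (conjL l)

def disjL : List MForm → MForm
  | [] => .and (.atom 0) (.natom 0)
  | φ :: l => .or φ (disjL l)

lemma msat_conjL {W : Type} (R : W → W → Prop) (V : ℕ → W → Prop) :
    ∀ (l : List MForm) (w : W), msat R V (conjL l) w ↔ ∀ φ ∈ l, msat R V φ w := by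
  intro l
  induction l with
  | nil => intro w; simp [conjL, msat]; exact em _
  | cons φ l ih => intro w; simp [conjL, msat, ih w]

lemma msat_disjL {W : Type} (R : W → W → Prop) (V : ℕ → W → Prop) :
    ∀ (l : List MForm) (w : W), msat R V (disjL l) w ↔ ∃ φ ∈ l, msat R V φ w := by
  intro l
  induction l with
  | nil => intro w; simp [disjL, msat]
  | cons φ l ih => intro w; simp [disjL, msat, ih w]

/-- Hennessy–Milner property for modally saturated models: modal-theory
inclusion satisfies the forth condition for ◇ and the back condition for □. -/
theorem saturated_theory_inclusion_is_bisimulation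
    {W W' : Type} [Nonempty W] [Nonempty W']
    (R : W → W → Prop) (V : ℕ → W → Prop)
    (R' : W' → W' → Prop) (V' : ℕ → W' → Prop)
    (hsat : MSaturated R V) (hsat' : MSaturated R' V') :
    (∀ w w', (∀ φ, msat R V φ w → msat R' V' φ w') → ∀ v, R w v →
      ∃ v', (∀ φ, msat R V φ v → msat R' V' φ v') ∧ R' w' v') ∧
    (∀ w w', (∀ φ, msat R V φ w → msat R' V' φ w') → ∀ v', R' w' v' →
      ∃ v, (∀ φ, msat R V φ v → msat R' V' φ v') ∧ R w v) := by
  constructor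
  · intro w w' hZ v hRv
    obtain ⟨v', hRv', hall⟩ := hsat'.1 w' {φ | msat R V φ v} (by
      intro s hs
      have hc : msat R V (.dia (conjL s.toList)) w :=
        ⟨v, hRv, (msat_conjL R V _ v).2 (fun φ hφ => hs (by simpa using hφ))⟩
      obtain ⟨v', hv', hcc⟩ := hZ _ hc
      exact ⟨v', hv', fun φ hφ => (msat_conjL R' V' _ v').1 hcc φ (by simpa using hφ)⟩)
    exact ⟨v', fun φ h => hall φ h, hRv'⟩
  · intro w w' hZ v' hRv'
    obtain ⟨v, hRv, hall⟩ := hsat.2 w {φ | ¬ msat R' V' φ v'} (by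
      intro s hs
      by_contra h
      push_neg at h
      have hbox : msat R V (.box (disjL s.toList)) w := by
        intro u hu
        obtain ⟨φ, hφ, hm⟩ := h u hu
        exact (msat_disjL R V _ u).2 ⟨φ, by simpa using hφ, hm⟩
      obtain ⟨φ, hφ, hm⟩ := (msat_disjL R' V' _ v').1 (hZ _ hbox v' hRv')
      exact hs (by simpa using hφ) hm)
    refine ⟨v, fun φ hm => ?_, hRv⟩
    by_contra hn
    exact hall φ hn hm
end
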